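/- Let w be a nonempty area sequence of size n. For each 1 ≤ k ≤ max(ψ(w)), the number of letters of ψ(w) whose value is greater than or equal to k equals n − i_k + 1, where i_k is the k-th smallest element of bounces(w). -/

import Mathlib

/-- The `i`-th letter of the word `w` (`1`-indexed, as in the paper);
defaults to `0` out of range. -/
def get1 (w : List ℕ) (i : ℕ) : ℕ := w.getD (i - 1) 0

/-- `w` is the area sequence of a Dyck path: the first letter is `0` and each
letter exceeds the previous one by at most one. -/
def IsAreaSeq (w : List ℕ) : Prop :=
  (w ≠ [] → get1 w 1 = 0) ∧ ∀ i, 1 ≤ i → i < w.length → get1 w (i + 1) ≤ get1 w i + 1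

/-- Insertion at position `i` (for `0 ≤ i ≤ n`): `ins w 0` prepends a `0`, and
for `1 ≤ i ≤ n`, `ins w i` inserts the letter `w_i + 1` just after position `i`. -/
def ins (w : List ℕ) (i : ℕ) : List ℕ :=
  w.take i ++ (if i = 0 then 0 else get1 w i + 1) :: w.drop i

/-- The area statistic: the sum of the letters. -/
def area (w : List ℕ) : ℕ := w.sum

/-- The dinv statistic: `dinv w = Σ_i d_i` where `d_i` is the number of `j > i`
with `w_j = w_i` or `w_j = w_i - 1`. -/
def dinv (w : List ℕ) : ℕ :=
  ∑ i ∈ Finset.Icc 1 w.length,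
    ((Finset.Ioc i w.length).filter
      (fun j => get1 w j = get1 w i ∨ get1 w j + 1 = get1 w i)).card

/-- The maximal value of a word (`0` for the empty word). -/
def maxVal (w : List ℕ) : ℕ := w.foldr max 0

/-- Positions of the letters of maximal value `m`. -/
def Maxb (w : List ℕ) : Finset ℕ :=
  (Finset.Icc 1 w.length).filter (fun i => get1 w i = maxVal w)

/-- Positions `i` with `w_i = m - 1` such that all letters after position `i`
are `< m`. -/
def Maxa (w : List ℕ) : Finset ℕ :=
  (Finset.Icc 1 w.length).filter (fun i =>
    get1 w i + 1 = maxVal w ∧ ∀ j ∈ Finset.Ioc i w.length, get1 w j < maxVal w)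

/-- The position of the leftmost letter equal to the maximal value `m` in the
rightmost block of consecutive letters equal to `m`. -/
def i0 (w : List ℕ) : ℕ :=
  ((Finset.Icc 1 w.length).filter (fun i =>
    get1 w i = maxVal w ∧ (i = 1 ∨ get1 w (i - 1) ≠ maxVal w))).sup id

/-- The admissible insertion positions of `w`, listed in admissible order:
the elements of `Maxb w` in decreasing order, then the elements of `Maxa w`
in decreasing order, then `i0 w - 1`.  The empty word has the single
admissible insertion position `0`. -/
def admissible (w : List ℕ) : List ℕ :=
  if w = [] then [0]
  else ((Maxb w).sort (· ≤ ·)).reverse ++ ((Maxa w).sort (· ≤ ·)).reverse ++ [i0 w - 1]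

/-- Auxiliary version of the map `ψ`, reading the reversed word. -/
def psiRev : List ℕ → List ℕ
  | [] => []
  | a :: u => ins (psiRev u) ((admissible (psiRev u)).getD a 0)

/-- The map `ψ`: `ψ(ε) = ε` and `ψ(u a) = ins_{c_a}(ψ(u))` where
`c_0, c_1, …, c_k` are the admissible insertion positions of `ψ(u)` in
admissible order. -/
def psi (w : List ℕ) : List ℕ := psiRev w.reverse

/-- The bounce sequence: `b_1 = 0`, and `b_i = b_{i-1} + 1` if
`b_{i-1} + 1 ≤ w_i`, otherwise `b_i = 0`. -/
def bseq (w : List ℕ) : ℕ → ℕ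
  | 0 => 0
  | 1 => 0
  | (i + 2) => if bseq w (i + 1) + 1 ≤ get1 w (i + 2) then bseq w (i + 1) + 1 else 0

/-- The bounces of `w`: positions `1 < i ≤ n` with `b_i = 0`. -/
def bounces (w : List ℕ) : Finset ℕ :=
  (Finset.Icc 2 w.length).filter (fun i => bseq w i = 0)

/-- The bounce statistic: the sum of the reversed positions `n - i + 1` of the
bounces of `w`. -/
def bounce (w : List ℕ) : ℕ := ∑ i ∈ bounces w, (w.length - i + 1)

/-!
Read `w` letter by letter and track `v = ψ(w)`. If `n = |w|` and `b = b_n`, then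
`max v = #bounces(w)`, `|Maxb v| = b + 1` and `|Maxa v| = w_n - b`, so the admissible positions
of `v` are `Maxb v` (`b + 1` of them), then `w_n - b` positions of `Maxa v`, then `i_0 - 1`.
Appending a letter `a ≤ w_n + 1`: if `a ≤ b`, then `n + 1` is a new bounce and `ψ` inserts a new
maximum `max v + 1` just after a maximal letter; otherwise `b` grows by one and `ψ` inserts a
letter equal to `max v`. Either way every level `k ≤ max v` gains one letter, and a new level is
opened, with a single letter, exactly when a new bounce appears; this gives
`#{x ∈ ψ(w) | k ≤ x} = n + 1 - i_k`.
-/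

open Finset

/-! ### Maxima and insertions -/

theorem maxVal_le_iff {v : List ℕ} {m : ℕ} : maxVal v ≤ m ↔ ∀ x ∈ v, x ≤ m := by
  induction v with
  | nil => simp [maxVal]
  | cons a t ih => simp [maxVal, ← ih]

theorem le_maxVal {v : List ℕ} {x : ℕ} (h : x ∈ v) : x ≤ maxVal v :=
  maxVal_le_iff.mp le_rfl x h

theorem maxVal_cons (a : ℕ) (l : List ℕ) : maxVal (a :: l) = max a (maxVal l) := rfl

theorem maxVal_mem {v : List ℕ} (h : v ≠ []) : maxVal v ∈ v := by
  induction v with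
  | nil => exact absurd rfl h
  | cons a t ih =>
    rw [maxVal_cons]
    rcases eq_or_ne t [] with rfl | ht
    · simp [maxVal]
    · rcases max_choice a (maxVal t) with he | he <;> rw [he]
      · exact List.mem_cons_self
      · exact List.mem_cons_of_mem _ (ih ht)

theorem maxVal_append (l₁ l₂ : List ℕ) : maxVal (l₁ ++ l₂) = max (maxVal l₁) (maxVal l₂) :=
  eq_of_forall_ge_iff fun m => by simp [maxVal_le_iff, or_imp, forall_and]

theorem get1_eq_getElem {v : List ℕ} {i : ℕ} (h₁ : 1 ≤ i) (h₂ : i ≤ v.length) :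
    get1 v i = v[i - 1] :=
  List.getD_eq_getElem v 0 (by omega)

theorem get1_le_maxVal (v : List ℕ) (i : ℕ) : get1 v i ≤ maxVal v := by
  rcases lt_or_ge (i - 1) v.length with h | h
  · rw [get1, List.getD_eq_getElem _ _ h]
    exact le_maxVal (List.getElem_mem _)
  · rw [get1, List.getD_eq_default _ _ h]
    exact Nat.zero_le _

theorem countP_le_eq_zero_of_maxVal_lt {v : List ℕ} {k : ℕ} (h : maxVal v < k) :
    v.countP (fun x => decide (k ≤ x)) = 0 :=
  List.countP_eq_zero.mpr fun x hx => by have := le_maxVal hx; simp; omega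

theorem get1_append_of_le (u : List ℕ) (a : ℕ) {i : ℕ} (h₁ : 1 ≤ i) (h₂ : i ≤ u.length) :
    get1 (u ++ [a]) i = get1 u i :=
  List.getD_append _ _ _ _ (by omega)

theorem get1_append_length (u : List ℕ) (a : ℕ) : get1 (u ++ [a]) (u.length + 1) = a := by
  simp [get1]

def insVal (v : List ℕ) (c : ℕ) : ℕ := if c = 0 then 0 else get1 v c + 1

theorem ins_eq (v : List ℕ) (c : ℕ) : ins v c = v.take c ++ insVal v c :: v.drop c := rfl

theorem length_ins {v : List ℕ} {c : ℕ} (hc : c ≤ v.length) : (ins v c).length = v.length + 1 := by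
  simp [ins_eq]; omega

theorem countP_ins (v : List ℕ) (c : ℕ) (p : ℕ → Bool) :
    (ins v c).countP p = v.countP p + if p (insVal v c) then 1 else 0 := by
  have hv := List.countP_append (p := p) (l₁ := v.take c) (l₂ := v.drop c)
  rw [List.take_append_drop] at hv
  simp only [ins_eq, List.countP_append, List.countP_cons]
  omega

theorem maxVal_ins (v : List ℕ) (c : ℕ) : maxVal (ins v c) = max (insVal v c) (maxVal v) := by
  have hv := maxVal_append (v.take c) (v.drop c)
  rw [List.take_append_drop] at hv
  simp only [ins_eq, maxVal_append, maxVal_cons]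
  omega

theorem get1_ins_of_le {v : List ℕ} {c i : ℕ} (hc : c ≤ v.length) (h₁ : 1 ≤ i) (h₂ : i ≤ c) :
    get1 (ins v c) i = get1 v i := by
  rw [get1_eq_getElem h₁ (by rw [length_ins hc]; omega), get1_eq_getElem h₁ (by omega)]
  simp [ins_eq, List.getElem_append_left (show i - 1 < (v.take c).length by simp; omega)]

theorem get1_ins_succ_self {v : List ℕ} {c : ℕ} (hc : c ≤ v.length) :
    get1 (ins v c) (c + 1) = insVal v c := by
  simp [get1, ins_eq, Nat.min_eq_left hc]

theorem get1_ins_succ_of_lt {v : List ℕ} {c i : ℕ} (hc : c ≤ v.length) (h : c < i) :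
    get1 (ins v c) (i + 1) = get1 v i := by
  obtain ⟨j, rfl⟩ : ∃ j, i = c + 1 + j := ⟨i - c - 1, by omega⟩
  have hlen : (v.take c).length = c := by simp [hc]
  simp only [get1, ins_eq, List.getD_eq_getElem?_getD, Nat.add_sub_cancel,
    List.getElem?_append_right (show (v.take c).length ≤ c + 1 + j by omega)]
  simp [hlen, show c + 1 + j - c = j + 1 by omega, List.getElem?_drop]

theorem isAreaSeq_ins {v : List ℕ} {c : ℕ} (hv : IsAreaSeq v) (hc : c ≤ v.length) :
    IsAreaSeq (ins v c) := by
  obtain ⟨hfirst, hstep⟩ := hv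
  refine ⟨fun _ => ?_, fun i hi₁ hi₂ => ?_⟩
  · rcases Nat.eq_zero_or_pos c with rfl | hc₀
    · simpa [insVal] using get1_ins_succ_self hc
    · rw [get1_ins_of_le hc le_rfl hc₀]
      exact hfirst (by rintro rfl; simp at hc; omega)
  rw [length_ins hc] at hi₂
  rcases lt_trichotomy i c with h | rfl | h
  · rw [get1_ins_of_le hc (by omega) h, get1_ins_of_le hc hi₁ h.le]
    exact hstep i hi₁ (by omega)
  · rw [get1_ins_succ_self hc, get1_ins_of_le hc hi₁ le_rfl, insVal, if_neg (by omega)]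
  obtain ⟨j, rfl⟩ : ∃ j, i = j + 1 := ⟨i - 1, by omega⟩
  rw [get1_ins_succ_of_lt hc h]
  rcases eq_or_lt_of_le (Nat.le_of_lt_succ h) with rfl | hj
  · rw [get1_ins_succ_self hc, insVal]
    split_ifs with hc₀
    · subst hc₀
      simp [hfirst (by rintro rfl; simp at hi₂)]
    · have := hstep c (by omega) (by omega)
      omega
  · rw [get1_ins_succ_of_lt hc hj]
    exact hstep j (by omega) (by omega)

theorem i0_le_length (v : List ℕ) : i0 v ≤ v.length :=
  Finset.sup_le fun _ hi => (mem_Icc.mp (mem_filter.mp hi).1).2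

theorem admissible_getD_le_length (v : List ℕ) (a : ℕ) : (admissible v).getD a 0 ≤ v.length := by
  suffices h : ∀ x ∈ admissible v, x ≤ v.length by
    rcases lt_or_ge a (admissible v).length with ha | ha
    · rw [List.getD_eq_getElem _ _ ha]
      exact h _ (List.getElem_mem ha)
    · rw [List.getD_eq_default _ _ ha]
      exact Nat.zero_le _
  unfold admissible
  split_ifs
  · simp
  · have := i0_le_length v
    simp only [List.mem_append, List.mem_reverse, mem_sort, Maxb, Maxa, mem_filter, mem_Icc,
      List.mem_singleton]
    omega

theorem psi_append (u : List ℕ) (a : ℕ) :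
    psi (u ++ [a]) = ins (psi u) ((admissible (psi u)).getD a 0) := by
  simp [psi, psiRev]

theorem length_psi (w : List ℕ) : (psi w).length = w.length := by
  induction w using List.reverseRecOn with
  | nil => rfl
  | append_singleton u a ih =>
    rw [psi_append, length_ins (admissible_getD_le_length _ _), ih, List.length_append,
      List.length_singleton]

theorem isAreaSeq_psi (w : List ℕ) : IsAreaSeq (psi w) := by
  induction w using List.reverseRecOn with
  | nil => exact ⟨fun h => absurd rfl h, fun i _ h => by simp [psi, psiRev] at h⟩
  | append_singleton u a ih =>
    rw [psi_append]
    exact isAreaSeq_ins ih (admissible_getD_le_length _ _)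

/-! ### Sorted finsets -/

theorem Finset.card_filter_getElem_sort_lt {α : Type*} [LinearOrder α] (s : Finset α) {i : ℕ}
    (hi : i < s.card) : #{x ∈ s | s.sort[i]'(by simpa) < x} = s.card - 1 - i := by
  have key : #{x ∈ univ.image (s.orderEmbOfFin rfl) | s.orderEmbOfFin rfl ⟨i, hi⟩ < x} =
      #(Ioi (⟨i, hi⟩ : Fin s.card)) := by
    rw [filter_image, card_image_of_injective _ (s.orderEmbOfFin rfl).injective]
    congr 1
    ext j
    simp
  rw [s.image_orderEmbOfFin_univ rfl, Fin.card_Ioi] at key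
  rwa [orderEmbOfFin_apply s rfl ⟨i, hi⟩] at key

theorem Finset.sort_insert_of_forall_lt {α : Type*} [LinearOrder α] {s : Finset α} {a : α}
    (h : ∀ b ∈ s, b < a) : (insert a s).sort = s.sort ++ [a] := by
  have hnodup : (s.sort ++ [a]).Nodup := by
    simpa [List.nodup_append] using fun b hb => (h b hb).ne
  have hsorted : (s.sort ++ [a]).Pairwise (· ≤ ·) := by
    simpa [List.pairwise_append] using fun b hb => (h b hb).le
  rw [← (List.toFinset_sort _ hnodup).mpr hsorted]
  congr 1
  ext; simp

theorem Finset.getD_sort_mem {α : Type*} [LinearOrder α] (s : Finset α) (d : α) {j : ℕ}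
    (hj : j < s.card) : s.sort.getD j d ∈ s := by
  rw [List.getD_eq_getElem _ _ (by simpa), ← mem_sort (· ≤ ·)]
  exact List.getElem_mem _

theorem Finset.getD_sort_reverse_mem {α : Type*} [LinearOrder α] (s : Finset α) (d : α) {j : ℕ}
    (hj : j < s.card) : s.sort.reverse.getD j d ∈ s := by
  rw [List.getD_eq_getElem _ _ (by simpa), ← mem_sort (· ≤ ·), ← List.mem_reverse]
  exact List.getElem_mem _

theorem Finset.card_filter_getD_sort_reverse_lt {α : Type*} [LinearOrder α] (s : Finset α) (d : α)
    {j : ℕ} (hj : j < s.card) : #{x ∈ s | s.sort.reverse.getD j d < x} = j := by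
  rw [List.getD_eq_getElem _ _ (by simpa), List.getElem_reverse]
  simp only [length_sort]
  rw [card_filter_getElem_sort_lt s (by omega)]
  omega

/-! ### Admissible insertions -/

theorem map_get1_range' (v : List ℕ) : (List.range' 1 v.length).map (get1 v) = v := by
  refine List.ext_getElem (by simp) fun j _ hj => ?_
  rw [List.getElem_map, List.getElem_range', get1, Nat.add_sub_cancel_left, Nat.one_mul,
    List.getD_eq_getElem _ _ hj]

theorem card_filter_get1 (v : List ℕ) (p : ℕ → Bool) :
    #{i ∈ Icc 1 v.length | p (get1 v i)} = v.countP p := by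
  conv_rhs => rw [← map_get1_range' v]
  rw [List.countP_map, List.countP_eq_length_filter, Nat.Icc_eq_range', Nat.add_sub_cancel]
  simp [Finset.card_def, Finset.filter_val]
  rfl

theorem mem_Maxb {v : List ℕ} {i : ℕ} :
    i ∈ Maxb v ↔ (1 ≤ i ∧ i ≤ v.length) ∧ get1 v i = maxVal v := by
  simp [Maxb]

theorem mem_Maxa {v : List ℕ} {i : ℕ} :
    i ∈ Maxa v ↔ (1 ≤ i ∧ i ≤ v.length) ∧ get1 v i + 1 = maxVal v ∧
      ∀ j ∈ Ioc i v.length, get1 v j < maxVal v := by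
  simp [Maxa]

theorem card_Maxb (v : List ℕ) : #(Maxb v) = v.countP (fun x => decide (x = maxVal v)) := by
  rw [← card_filter_get1]
  simp [Maxb]

theorem Maxb_nonempty {v : List ℕ} (hv : v ≠ []) : (Maxb v).Nonempty := by
  obtain ⟨n, hn, he⟩ := List.mem_iff_getElem.mp (maxVal_mem hv)
  refine ⟨n + 1, mem_Maxb.mpr ⟨⟨by omega, by omega⟩, ?_⟩⟩
  rw [get1_eq_getElem (by omega) (by omega)]
  simpa using he

theorem i0_spec {v : List ℕ} (hv : v ≠ []) :
    (1 ≤ i0 v ∧ i0 v ≤ v.length) ∧ get1 v (i0 v) = maxVal v ∧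
      (i0 v = 1 ∨ get1 v (i0 v - 1) ≠ maxVal v) := by
  have hMaxb := Maxb_nonempty hv
  -- the first maximal letter starts a block of maximal letters
  have hfirst : (Maxb v).min' hMaxb ∈ {i ∈ Icc 1 v.length |
      get1 v i = maxVal v ∧ (i = 1 ∨ get1 v (i - 1) ≠ maxVal v)} := by
    obtain ⟨hrange, hmax⟩ := mem_Maxb.mp ((Maxb v).min'_mem hMaxb)
    refine mem_filter.mpr ⟨mem_Icc.mpr hrange, hmax, or_iff_not_imp_left.mpr fun h hprev => ?_⟩
    have := (Maxb v).min'_le _ (mem_Maxb.mpr ⟨⟨by omega, by omega⟩, hprev⟩)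
    omega
  obtain ⟨b, hb, hsup⟩ := exists_mem_eq_sup _ ⟨_, hfirst⟩ id
  rw [i0, hsup, id]
  simpa using hb

theorem insVal_i0_sub_one {v : List ℕ} (hv : IsAreaSeq v) (hne : v ≠ []) :
    insVal v (i0 v - 1) = maxVal v := by
  obtain ⟨⟨h₁, h₂⟩, hmax, hstart⟩ := i0_spec hne
  rw [insVal]
  split_ifs with h
  · rw [← hmax, show i0 v = 1 by omega, hv.1 hne]
  · have hstep := hv.2 (i0 v - 1) (by omega) (by omega)
    have := get1_le_maxVal v (i0 v - 1)
    rw [Nat.sub_add_cancel h₁, hmax] at hstep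
    omega

theorem i0_le_of_mem_Maxa {v : List ℕ} (hne : v ≠ []) {j : ℕ} (hj : j ∈ Maxa v) : i0 v ≤ j := by
  obtain ⟨⟨_, h₂⟩, hmax, -⟩ := i0_spec hne
  obtain ⟨_, hj, hafter⟩ := mem_Maxa.mp hj
  by_contra! h
  have := hafter (i0 v) (mem_Ioc.mpr ⟨h, h₂⟩)
  omega

theorem card_Maxb_ins_of_insVal_eq_succ {v : List ℕ} {c : ℕ}
    (h : insVal v c = maxVal v + 1) : #(Maxb (ins v c)) = 1 := by
  have hmax : maxVal (ins v c) = maxVal v + 1 := by rw [maxVal_ins, h]; omega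
  rw [card_Maxb, hmax, countP_ins, h,
    List.countP_eq_zero.mpr fun x hx => by have := le_maxVal hx; simp; omega]
  simp

theorem card_Maxb_ins_of_insVal_eq {v : List ℕ} {c : ℕ} (h : insVal v c = maxVal v) :
    #(Maxb (ins v c)) = #(Maxb v) + 1 := by
  have hmax : maxVal (ins v c) = maxVal v := by rw [maxVal_ins, h]; omega
  simp [card_Maxb, hmax, countP_ins, h]

theorem card_Maxa_ins {v : List ℕ} {c M : ℕ} (hc : c ≤ v.length) (hval : insVal v c = M)
    (hmax : maxVal (ins v c) = M) :
    #(Maxa (ins v c)) = #{j ∈ Icc 1 v.length | get1 v j + 1 = M ∧ c < j ∧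
      ∀ j' ∈ Ioc j v.length, get1 v j' < M} := by
  have hself : get1 (ins v c) (c + 1) = M := by rw [get1_ins_succ_self hc, hval]
  refine card_bij' (fun i _ => i - 1) (fun j _ => j + 1) (fun i hi => ?_) (fun j hj => ?_)
    (fun i hi => ?_) (fun j _ => rfl)
  · obtain ⟨⟨hi₁, hi₂⟩, hvi, hafter⟩ := mem_Maxa.mp hi
    rw [length_ins hc] at hi₂ hafter
    rw [hmax] at hvi hafter
    -- the inserted letter equals the maximum, so every position of `Maxa` lies after it
    have hci : c + 1 < i := by
      rcases lt_trichotomy i (c + 1) with h | h | h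
      · have := hafter (c + 1) (mem_Ioc.mpr ⟨h, by omega⟩); omega
      · rw [h, hself] at hvi; omega
      · exact h
    obtain ⟨i, rfl⟩ : ∃ i', i = i' + 1 := ⟨i - 1, by omega⟩
    rw [get1_ins_succ_of_lt hc (by omega)] at hvi
    refine mem_filter.mpr ⟨mem_Icc.mpr ⟨by omega, by omega⟩, hvi, by omega, fun j' hj' => ?_⟩
    obtain ⟨hj'₁, hj'₂⟩ := mem_Ioc.mp hj'
    simpa [get1_ins_succ_of_lt hc (show c < j' by omega)] using
      hafter (j' + 1) (mem_Ioc.mpr ⟨by omega, by omega⟩)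
  · obtain ⟨hj, hvj, hcj, hafter⟩ := mem_filter.mp hj
    obtain ⟨hj₁, hj₂⟩ := mem_Icc.mp hj
    refine mem_Maxa.mpr ⟨⟨by omega, by rw [length_ins hc]; omega⟩, ?_, fun j' hj' => ?_⟩
    · rwa [hmax, get1_ins_succ_of_lt hc hcj]
    · obtain ⟨hj'₁, hj'₂⟩ := mem_Ioc.mp hj'
      rw [length_ins hc] at hj'₂
      obtain ⟨j', rfl⟩ : ∃ k, j' = k + 1 := ⟨j' - 1, by omega⟩
      rw [hmax, get1_ins_succ_of_lt hc (by omega)]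
      exact hafter j' (mem_Ioc.mpr ⟨by omega, by omega⟩)
  · have := (mem_Maxa.mp hi).1.1
    omega

theorem insVal_of_mem_Maxb {v : List ℕ} {c : ℕ} (hc : c ∈ Maxb v) :
    insVal v c = maxVal v + 1 := by
  obtain ⟨⟨hc₁, _⟩, hmax⟩ := mem_Maxb.mp hc
  rw [insVal, if_neg (by omega), hmax]

theorem insVal_of_mem_Maxa {v : List ℕ} {c : ℕ} (hc : c ∈ Maxa v) : insVal v c = maxVal v := by
  obtain ⟨⟨hc₁, _⟩, hval, -⟩ := mem_Maxa.mp hc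
  rw [insVal, if_neg (by omega), hval]

theorem card_Maxa_ins_of_mem_Maxb {v : List ℕ} {c : ℕ} (hc : c ∈ Maxb v) :
    #(Maxa (ins v c)) = #{x ∈ Maxb v | c < x} := by
  have hval := insVal_of_mem_Maxb hc
  rw [card_Maxa_ins (mem_Maxb.mp hc).1.2 hval (by rw [maxVal_ins, hval]; omega)]
  congr 1
  ext j
  have := get1_le_maxVal v
  simp only [mem_filter, mem_Maxb, mem_Icc]
  constructor
  · rintro ⟨hj, hvj, hcj, -⟩
    exact ⟨⟨hj, by omega⟩, hcj⟩
  · rintro ⟨⟨hj, hvj⟩, hcj⟩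
    exact ⟨hj, by omega, hcj, fun j' _ => by have := this j'; omega⟩

theorem card_Maxa_ins_of_insVal_eq {v : List ℕ} {c : ℕ} (hc : c ≤ v.length)
    (hval : insVal v c = maxVal v) : #(Maxa (ins v c)) = #{x ∈ Maxa v | c < x} := by
  rw [card_Maxa_ins hc hval (by rw [maxVal_ins, hval]; omega)]
  congr 1
  ext j
  simp only [mem_filter, mem_Maxa, mem_Icc]
  tauto

theorem admissible_getD_of_lt {v : List ℕ} (hv : v ≠ []) {a : ℕ} (ha : a < #(Maxb v)) :
    (admissible v).getD a 0 = (Maxb v).sort.reverse.getD a 0 := by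
  rw [admissible, if_neg hv, List.append_assoc, List.getD_append _ _ _ _ (by simpa)]

theorem admissible_getD_of_le_of_lt {v : List ℕ} (hv : v ≠ []) {a : ℕ} (h₁ : #(Maxb v) ≤ a)
    (h₂ : a < #(Maxb v) + #(Maxa v)) :
    (admissible v).getD a 0 = (Maxa v).sort.reverse.getD (a - #(Maxb v)) 0 := by
  rw [admissible, if_neg hv, List.getD_append _ _ _ _ (by simpa),
    List.getD_append_right _ _ _ _ (by simpa)]
  simp

theorem admissible_getD_card_add_card {v : List ℕ} (hv : v ≠ []) :
    (admissible v).getD (#(Maxb v) + #(Maxa v)) 0 = i0 v - 1 := by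
  rw [admissible, if_neg hv, List.getD_append_right _ _ _ _ (by simp)]
  simp

theorem ins_admissible_of_lt {v : List ℕ} (hv : v ≠ []) {a : ℕ} (ha : a < #(Maxb v)) :
    insVal v ((admissible v).getD a 0) = maxVal v + 1 ∧
      #(Maxb (ins v ((admissible v).getD a 0))) = 1 ∧
      #(Maxa (ins v ((admissible v).getD a 0))) = a := by
  rw [admissible_getD_of_lt hv ha]
  have hc := getD_sort_reverse_mem _ 0 ha
  have hval := insVal_of_mem_Maxb hc
  refine ⟨hval, card_Maxb_ins_of_insVal_eq_succ hval, ?_⟩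
  rw [card_Maxa_ins_of_mem_Maxb hc, card_filter_getD_sort_reverse_lt _ 0 ha]

theorem ins_admissible_of_le {v : List ℕ} (hv : IsAreaSeq v) (hne : v ≠ []) {a : ℕ}
    (h₁ : #(Maxb v) ≤ a) (h₂ : a ≤ #(Maxb v) + #(Maxa v)) :
    insVal v ((admissible v).getD a 0) = maxVal v ∧
      #(Maxb (ins v ((admissible v).getD a 0))) = #(Maxb v) + 1 ∧
      #(Maxa (ins v ((admissible v).getD a 0))) = a - #(Maxb v) := by
  obtain ⟨hval, hlater⟩ : insVal v ((admissible v).getD a 0) = maxVal v ∧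
      #{x ∈ Maxa v | (admissible v).getD a 0 < x} = a - #(Maxb v) := by
    rcases h₂.lt_or_eq with h₂ | rfl
    · have hq : a - #(Maxb v) < #(Maxa v) := by omega
      rw [admissible_getD_of_le_of_lt hne h₁ h₂]
      exact ⟨insVal_of_mem_Maxa (getD_sort_reverse_mem _ 0 hq),
        card_filter_getD_sort_reverse_lt _ 0 hq⟩
    · have hlater : ∀ x ∈ Maxa v, i0 v - 1 < x := fun x hx => by
        have := i0_le_of_mem_Maxa hne hx
        have := (mem_Maxa.mp hx).1.1
        omega
      rw [admissible_getD_card_add_card hne, Nat.add_sub_cancel_left, filter_true_of_mem hlater]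
      exact ⟨insVal_i0_sub_one hv hne, rfl⟩
  refine ⟨hval, card_Maxb_ins_of_insVal_eq hval, ?_⟩
  rw [card_Maxa_ins_of_insVal_eq (admissible_getD_le_length v a) hval, hlater]

/-! ### Bounces -/

theorem bseq_le_get1 (w : List ℕ) {i : ℕ} (hi : 1 ≤ i) : bseq w i ≤ get1 w i := by
  match i, hi with
  | 1, _ => simp [bseq]
  | i + 2, _ =>
    rw [bseq]
    split_ifs <;> omega

theorem bseq_append_of_le (u : List ℕ) (a : ℕ) {i : ℕ} (h : i ≤ u.length) :
    bseq (u ++ [a]) i = bseq u i := by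
  induction i using Nat.strong_induction_on with
  | _ i ih =>
    match i with
    | 0 | 1 => rfl
    | j + 2 =>
      rw [bseq, bseq, ih (j + 1) (by omega) (by omega), get1_append_of_le u a (by omega) h]

theorem bseq_append_length {u : List ℕ} (hu : u ≠ []) (a : ℕ) :
    bseq (u ++ [a]) (u.length + 1) =
      if bseq u u.length + 1 ≤ a then bseq u u.length + 1 else 0 := by
  obtain ⟨m, hm⟩ : ∃ m, u.length = m + 1 :=
    ⟨u.length - 1, by have := List.length_pos_iff.mpr hu; omega⟩
  rw [hm, bseq, bseq_append_of_le u a (by omega), ← hm, show m + 2 = u.length + 1 by omega,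
    get1_append_length]

theorem mem_bounces {w : List ℕ} {i : ℕ} :
    i ∈ bounces w ↔ (2 ≤ i ∧ i ≤ w.length) ∧ bseq w i = 0 := by
  simp [bounces]

theorem mem_bounces_append {u : List ℕ} {a i : ℕ} :
    i ∈ bounces (u ++ [a]) ↔
      i ∈ bounces u ∨ i = u.length + 1 ∧ 2 ≤ i ∧ bseq (u ++ [a]) (u.length + 1) = 0 := by
  simp only [mem_bounces, List.length_append, List.length_singleton]
  constructor
  · rintro ⟨⟨h₁, h₂⟩, h⟩
    rcases h₂.lt_or_eq with h₂ | rfl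
    · exact Or.inl ⟨⟨h₁, by omega⟩, by rwa [← bseq_append_of_le u a (by omega)]⟩
    · exact Or.inr ⟨rfl, h₁, h⟩
  · rintro (⟨⟨h₁, h₂⟩, h⟩ | ⟨rfl, h₁, h⟩)
    · exact ⟨⟨h₁, by omega⟩, by rwa [bseq_append_of_le u a h₂]⟩
    · exact ⟨⟨h₁, le_rfl⟩, h⟩

theorem bounces_append_of_lt {u : List ℕ} (hu : u ≠ []) {a : ℕ} (h : bseq u u.length < a) :
    bounces (u ++ [a]) = bounces u := by
  ext i
  simp [mem_bounces_append, bseq_append_length hu, Nat.succ_le_of_lt h]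

theorem bounces_append_of_le {u : List ℕ} (hu : u ≠ []) {a : ℕ} (h : a ≤ bseq u u.length) :
    bounces (u ++ [a]) = insert (u.length + 1) (bounces u) := by
  have := List.length_pos_iff.mpr hu
  have hnot : ¬bseq u u.length + 1 ≤ a := by omega
  ext i
  simp only [mem_bounces_append, bseq_append_length hu, hnot, if_false, mem_insert]
  exact ⟨fun h => h.elim Or.inr fun h => Or.inl h.1,
    fun h => h.elim (fun h => Or.inr ⟨h, by omega, trivial⟩) Or.inl⟩

/-! ### The invariant of `ψ` -/

theorem isAreaSeq_of_append {u : List ℕ} {a : ℕ} (h : IsAreaSeq (u ++ [a])) : IsAreaSeq u := by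
  refine ⟨fun hu => ?_, fun i hi₁ hi₂ => ?_⟩
  · rw [← get1_append_of_le u a le_rfl (List.length_pos_iff.mpr hu)]
    exact h.1 (by simp)
  · rw [← get1_append_of_le u a (by omega) hi₂, ← get1_append_of_le u a hi₁ hi₂.le]
    exact h.2 i hi₁ (by simp; omega)

theorem le_get1_length_add_one {u : List ℕ} (hu : u ≠ []) {a : ℕ} (h : IsAreaSeq (u ++ [a])) :
    a ≤ get1 u u.length + 1 := by
  have hlen := List.length_pos_iff.mpr hu
  have := h.2 u.length hlen (by simp)
  rwa [get1_append_length, get1_append_of_le u a hlen le_rfl] at this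

theorem countP_le_ins_of_le {v : List ℕ} {c k : ℕ} (h : k ≤ insVal v c) :
    (ins v c).countP (fun x => decide (k ≤ x)) = v.countP (fun x => decide (k ≤ x)) + 1 := by
  simp [countP_ins, h]

theorem psi_ne_nil {w : List ℕ} (hw : w ≠ []) : psi w ≠ [] := by
  simpa [← List.length_pos_iff, length_psi] using hw

structure PsiInvariant (w : List ℕ) : Prop where
  maxVal_psi : maxVal (psi w) = #(bounces w)
  countP_psi_add : ∀ k, 1 ≤ k → k ≤ #(bounces w) →
    (psi w).countP (fun x => decide (k ≤ x)) + (bounces w).sort.getD (k - 1) 0 = w.length + 1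
  card_Maxb_psi : #(Maxb (psi w)) = bseq w w.length + 1
  card_Maxa_psi : #(Maxa (psi w)) = get1 w w.length - bseq w w.length

theorem psiInvariant_singleton : PsiInvariant [0] where
  maxVal_psi := by decide
  countP_psi_add k hk₁ hk₂ := by simp [bounces] at hk₂; omega
  card_Maxb_psi := by decide
  card_Maxa_psi := by decide

theorem PsiInvariant.append_of_le {u : List ℕ} (hu : PsiInvariant u) (hne : u ≠ []) {a : ℕ}
    (ha : a ≤ bseq u u.length) : PsiInvariant (u ++ [a]) := by
  obtain ⟨hval, hMaxb, hMaxa⟩ :=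
    ins_admissible_of_lt (psi_ne_nil hne) (a := a) (by rw [hu.card_Maxb_psi]; omega)
  have hbseq : bseq (u ++ [a]) (u.length + 1) = 0 := by
    rw [bseq_append_length hne, if_neg (by omega)]
  have hlast : ∀ i ∈ bounces u, i < u.length + 1 := fun i hi => by
    have := (mem_bounces.mp hi).1.2; omega
  have hcard : #(bounces (u ++ [a])) = #(bounces u) + 1 := by
    rw [bounces_append_of_le hne ha, card_insert_of_notMem fun h => (hlast _ h).false]
  have hsort : (bounces (u ++ [a])).sort = (bounces u).sort ++ [u.length + 1] := by
    rw [bounces_append_of_le hne ha, sort_insert_of_forall_lt hlast]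
  refine ⟨?_, fun k hk₁ hk₂ => ?_, ?_, ?_⟩ <;> rw [psi_append]
  · rw [maxVal_ins, hval, hu.maxVal_psi, hcard]
    omega
  · rw [countP_le_ins_of_le (by rw [hval, hu.maxVal_psi]; omega), hsort, List.length_append,
      List.length_singleton]
    rcases (show k ≤ #(bounces u) ∨ k = #(bounces u) + 1 by omega) with hk | rfl
    · rw [List.getD_append _ _ _ _ (by simp; omega)]
      have := hu.countP_psi_add k hk₁ hk
      omega
    · rw [List.getD_append_right _ _ _ _ (by simp), length_sort, Nat.add_sub_cancel, Nat.sub_self,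
        countP_le_eq_zero_of_maxVal_lt (by rw [hu.maxVal_psi]; omega), List.getD_cons_zero]
      omega
  · rw [hMaxb, List.length_append, List.length_singleton, hbseq]
  · rw [hMaxa, List.length_append, List.length_singleton, hbseq, get1_append_length]
    rfl

theorem PsiInvariant.append_of_lt {u : List ℕ} (hu : PsiInvariant u) (hne : u ≠ []) {a : ℕ}
    (h₁ : bseq u u.length < a) (h₂ : a ≤ get1 u u.length + 1) : PsiInvariant (u ++ [a]) := by
  have hb := bseq_le_get1 u (List.length_pos_iff.mpr hne)
  obtain ⟨hval, hMaxb, hMaxa⟩ := ins_admissible_of_le (isAreaSeq_psi u) (psi_ne_nil hne) (a := a)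
    (by rw [hu.card_Maxb_psi]; omega) (by rw [hu.card_Maxb_psi, hu.card_Maxa_psi]; omega)
  have hbseq : bseq (u ++ [a]) (u.length + 1) = bseq u u.length + 1 := by
    rw [bseq_append_length hne, if_pos (by omega)]
  have hbounces := bounces_append_of_lt hne h₁
  refine ⟨?_, fun k hk₁ hk₂ => ?_, ?_, ?_⟩ <;> rw [psi_append]
  · rw [maxVal_ins, hval, hu.maxVal_psi, hbounces]
    omega
  · rw [hbounces] at hk₂ ⊢
    rw [countP_le_ins_of_le (by rw [hval, hu.maxVal_psi]; omega), List.length_append,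
      List.length_singleton]
    have := hu.countP_psi_add k hk₁ hk₂
    omega
  · rw [hMaxb, hu.card_Maxb_psi, List.length_append, List.length_singleton, hbseq]
  · rw [hMaxa, hu.card_Maxb_psi, List.length_append, List.length_singleton, hbseq,
      get1_append_length]

theorem psiInvariant {w : List ℕ} (hw : IsAreaSeq w) (hne : w ≠ []) : PsiInvariant w := by
  induction w using List.reverseRecOn with
  | nil => exact absurd rfl hne
  | append_singleton u a ih =>
    rcases eq_or_ne u [] with rfl | hu
    · obtain rfl : a = 0 := hw.1 (by simp)
      exact psiInvariant_singleton
    have ih := ih (isAreaSeq_of_append hw) hu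
    rcases le_or_gt a (bseq u u.length) with ha | ha
    · exact ih.append_of_le hu ha
    · exact ih.append_of_lt hu ha (le_get1_length_add_one hu hw)

theorem count_ge_eq_reversed_bounce_general (w : List ℕ) (hw : IsAreaSeq w)
    (k : ℕ) (hk1 : 1 ≤ k) (hk2 : k ≤ maxVal (psi w)) :
    (psi w).countP (fun x => decide (k ≤ x)) =
      w.length - ((bounces w).sort (· ≤ ·)).getD (k - 1) 0 + 1 := by
  rcases eq_or_ne w [] with rfl | hne
  · simp [psi, psiRev, maxVal] at hk2
    omega
  have hinv := psiInvariant hw hne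
  rw [hinv.maxVal_psi] at hk2
  have hbounce := (mem_bounces.mp (getD_sort_mem (bounces w) 0 (j := k - 1) (by omega))).1.2
  have := hinv.countP_psi_add k hk1 hk2
  omega

/-- For a nonempty area sequence `w` of size `n` and `1 ≤ k ≤ max (ψ w)`, the
number of letters of `ψ w` of value at least `k` equals `n - i_k + 1`, where
`i_k` is the `k`-th smallest element of `bounces w`. -/
theorem count_ge_eq_reversed_bounce (w : List ℕ) (hw : IsAreaSeq w) (hne : w ≠ [])
    (k : ℕ) (hk1 : 1 ≤ k) (hk2 : k ≤ maxVal (psi w)) :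
    (psi w).countP (fun x => decide (k ≤ x)) =
      w.length - ((bounces w).sort (· ≤ ·)).getD (k - 1) 0 + 1 :=
  count_ge_eq_reversed_bounce_general w hw k hk1 hk2
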